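/- The adjunction between the category Top of topological spaces and the category Loc of locales, given by the open-sets functor Lc : Top → Loc and the points functor Sp : Loc → Top, restricts to an equivalence between the full subcategory of Top whose objects are the sober locally compact spaces and the full subcategory of Loc whose objects are the continuous locales (Hofmann–Lawson duality). -/

import Mathlib

open CategoryTheory TopologicalSpace

universe u

/-- The way-below relation in a complete lattice: `x ≪ a` iff for every nonempty
directed subset `D` with `a ≤ ⨆ D` there is `d ∈ D` with `x ≤ d`. -/
def WayBelow {L : Type*} [CompleteLattice L] (x a : L) : Prop :=
  ∀ D : Set L, D.Nonempty → DirectedOn (· ≤ ·) D → a ≤ sSup D → ∃ d ∈ D, x ≤ d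

/-- A locale is continuous if every element of its underlying frame is the supremum of
the elements way below it. -/
def IsContinuousLocale (L : Locale.{u}) : Prop :=
  ∀ a : L, a = sSup {x : L | WayBelow x a}

/-- A topological space is sober and locally compact if every irreducible closed set is
the closure of a unique point (`QuasiSober` together with `T0Space`) and every point has
a neighbourhood basis of compact sets. -/
def IsSoberLocallyCompact (X : TopCat.{u}) : Prop :=
  QuasiSober X ∧ T0Space X ∧ LocallyCompactSpace X

/-!
In a continuous frame, interpolation turns `x ≪ a` into a sequence `a ≫ c₁ ≫ c₂ ≫ ⋯ ≫ x`, whose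
upper closure is a Scott-open filter containing `a` and contained in `Ici x`. By Zorn's lemma, a
Scott-open filter maximal among those avoiding a given `b` is prime, hence completely prime, i.e. a
point. So continuous frames are spatial, which makes the counit an isomorphism, and the sets of
points containing a Scott-open filter are compact, which makes `pt L` locally compact; `pt L` is
always sober. Conversely, in a locally compact space the interior of a compact neighbourhood inside
an open `V` is way below `V`, and for a sober `T₀` space the unit is a bijective open map.
-/

open Set Locale

def IsContinuousLattice (L : Type*) [CompleteLattice L] : Prop :=
  ∀ a : L, a = sSup {x : L | WayBelow x a}

section WayBelow

variable {L : Type*} [CompleteLattice L] {x y a b : L}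

theorem WayBelow.le (h : WayBelow x a) : x ≤ a := by
  obtain ⟨d, rfl, hxd⟩ := h {a} (singleton_nonempty a) (directedOn_singleton a)
    (le_sSup (mem_singleton a))
  exact hxd

theorem bot_wayBelow (a : L) : WayBelow ⊥ a := fun _ ⟨d, hd⟩ _ _ => ⟨d, hd, bot_le⟩

theorem WayBelow.mono_left (hyx : y ≤ x) (h : WayBelow x a) : WayBelow y a :=
  fun D hD hdir haD => (h D hD hdir haD).imp fun _ ⟨hd, hxd⟩ => ⟨hd, hyx.trans hxd⟩

theorem WayBelow.mono_right (h : WayBelow x a) (hab : a ≤ b) : WayBelow x b :=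
  fun D hD hdir hbD => h D hD hdir (hab.trans hbD)

theorem WayBelow.sup (hx : WayBelow x a) (hy : WayBelow y a) : WayBelow (x ⊔ y) a := by
  intro D hD hdir haD
  obtain ⟨d, hd, hxd⟩ := hx D hD hdir haD
  obtain ⟨e, he, hye⟩ := hy D hD hdir haD
  obtain ⟨f, hf, hdf, hef⟩ := hdir d hd e he
  exact ⟨f, hf, sup_le (hxd.trans hdf) (hye.trans hef)⟩

theorem IsContinuousLattice.exists_wayBelow_wayBelow (hL : IsContinuousLattice L)
    (h : WayBelow x a) : ∃ y, WayBelow x y ∧ WayBelow y a := by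
  let B : Set L := {z | ∃ y, WayBelow z y ∧ WayBelow y a}
  have hB : B.Nonempty := ⟨⊥, ⊥, bot_wayBelow ⊥, bot_wayBelow a⟩
  have hdir : DirectedOn (· ≤ ·) B := by
    rintro z ⟨y, hzy, hya⟩ z' ⟨y', hzy', hy'a⟩
    exact ⟨z ⊔ z', ⟨y ⊔ y', (hzy.mono_right le_sup_left).sup (hzy'.mono_right le_sup_right),
      hya.sup hy'a⟩, le_sup_left, le_sup_right⟩
  have haB : a ≤ sSup B := (hL a).le.trans <| sSup_le fun y hy =>
    (hL y).le.trans <| sSup_le_sSup fun z hz => ⟨y, hz, hy⟩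
  obtain ⟨z, ⟨y, hzy, hya⟩, hxz⟩ := h B hB hdir haB
  exact ⟨y, hzy.mono_left hxz, hya⟩

theorem IsContinuousLattice.exists_seq_wayBelow (hL : IsContinuousLattice L)
    (h : WayBelow x a) :
    ∃ c : ℕ → L, c 0 = a ∧ (∀ n, x ≤ c n) ∧ ∀ n, WayBelow (c (n + 1)) (c n) := by
  have step (y : {y : L // WayBelow x y}) : ∃ z : {y : L // WayBelow x y}, WayBelow z.1 y.1 :=
    let ⟨z, hxz, hzy⟩ := hL.exists_wayBelow_wayBelow y.2
    ⟨⟨z, hxz⟩, hzy⟩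
  choose f hf using step
  refine ⟨fun n => (f^[n] ⟨a, h⟩).1, rfl, fun n => (f^[n] ⟨a, h⟩).2.le, fun n => ?_⟩
  beta_reduce
  rw [Function.iterate_succ_apply']
  exact hf _

end WayBelow

structure IsScottOpenFilter {L : Type*} [CompleteLattice L] (F : Set L) : Prop where
  top_mem : ⊤ ∈ F
  isUpperSet : IsUpperSet F
  inf_mem ⦃y z : L⦄ : y ∈ F → z ∈ F → y ⊓ z ∈ F
  exists_mem_of_sSup_mem (D : Set L) :
    D.Nonempty → DirectedOn (· ≤ ·) D → sSup D ∈ F → ∃ d ∈ D, d ∈ F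

namespace IsScottOpenFilter

section CompleteLattice

variable {L : Type*} [CompleteLattice L] {F : Set L}

theorem setOf_exists_le_of_wayBelow {c : ℕ → L} (hc : ∀ n, WayBelow (c (n + 1)) (c n)) :
    IsScottOpenFilter {y | ∃ n, c n ≤ y} := by
  have hanti : Antitone c := antitone_nat_of_succ_le fun n => (hc n).le
  refine ⟨⟨0, le_top⟩, fun y z hyz ⟨n, hn⟩ => ⟨n, hn.trans hyz⟩, ?_, ?_⟩
  · rintro y z ⟨n, hn⟩ ⟨m, hm⟩
    exact ⟨max n m, le_inf ((hanti (le_max_left n m)).trans hn)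
      ((hanti (le_max_right n m)).trans hm)⟩
  · rintro D hD hdir ⟨n, hn⟩
    obtain ⟨d, hd, hcd⟩ := hc n D hD hdir hn
    exact ⟨d, hd, n + 1, hcd⟩

theorem exists_finset_sup_mem (hF : IsScottOpenFilter F) {ι : Type*} (u : ι → L)
    (hu : ⨆ i, u i ∈ F) : ∃ t : Finset ι, t.sup u ∈ F := by
  have hdir : DirectedOn (· ≤ ·) (range fun t : Finset ι => t.sup u) :=
    directedOn_range.2 (Monotone.directed_le fun _ _ => Finset.sup_mono)
  have hsup : sSup (range fun t : Finset ι => t.sup u) = ⨆ i, u i := by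
    simp only [sSup_range, Finset.sup_eq_iSup, ← iSup_eq_iSup_finset]
  obtain ⟨_, ⟨t, rfl⟩, ht⟩ := hF.exists_mem_of_sSup_mem _ (range_nonempty _) hdir (hsup ▸ hu)
  exact ⟨t, ht⟩

theorem exists_mem_of_sSup_mem_of_prime (hF : IsScottOpenFilter F) (hbot : ⊥ ∉ F)
    (hprime : ∀ ⦃y z⦄, y ⊔ z ∈ F → y ∈ F ∨ z ∈ F) {T : Set L} (hT : sSup T ∈ F) :
    ∃ t ∈ T, t ∈ F := by
  by_contra! hTF
  obtain ⟨s, hs⟩ := hF.exists_finset_sup_mem (fun t : T => (t : L)) (sSup_eq_iSup' T ▸ hT)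
  exact Finset.sup_induction (p := (· ∉ F)) hbot
    (fun y hy z hz hyz => (hprime hyz).elim hy hz) (fun t _ => hTF t.1 t.2) hs

def toPT (hF : IsScottOpenFilter F) (hbot : ⊥ ∉ F)
    (hprime : ∀ ⦃y z⦄, y ⊔ z ∈ F → y ∈ F ∨ z ∈ F) : PT L where
  toFun y := y ∈ F
  map_inf' y z := propext ⟨fun h => ⟨hF.isUpperSet inf_le_left h, hF.isUpperSet inf_le_right h⟩,
    fun h => hF.inf_mem h.1 h.2⟩
  map_top' := eq_true hF.top_mem
  map_sSup' T := propext <| by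
    simp only [sSup_image, iSup_Prop_eq, exists_prop]
    exact ⟨hF.exists_mem_of_sSup_mem_of_prime hbot hprime,
      fun ⟨_, ht, htF⟩ => hF.isUpperSet (le_sSup ht) htF⟩

end CompleteLattice

section Frame

variable {L : Type*} [Order.Frame L] {F : Set L}

theorem preimage_sup_left (hF : IsScottOpenFilter F) (w : L) :
    IsScottOpenFilter {y | w ⊔ y ∈ F} := by
  refine ⟨by simpa using hF.top_mem, fun y z hyz hy => hF.isUpperSet (sup_le_sup_left hyz w) hy,
    fun y z hy hz => ?_, fun D hD hdir hwD => ?_⟩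
  · simpa only [mem_ofPred_eq, sup_inf_left] using hF.inf_mem hy hz
  · have hdir' : DirectedOn (· ≤ ·) ((w ⊔ ·) '' D) :=
      directedOn_image.2 (hdir.mono fun _ _ h => sup_le_sup_left h w)
    have hsup : sSup ((w ⊔ ·) '' D) = w ⊔ sSup D := by
      rw [sSup_image, sSup_eq_iSup, sup_biSup hD]
    obtain ⟨_, ⟨d, hd, rfl⟩, hdF⟩ :=
      hF.exists_mem_of_sSup_mem _ (hD.image _) hdir' (hsup ▸ hwD)
    exact ⟨d, hd, hdF⟩

theorem sUnion {C : Set (Set L)} (hC : ∀ F ∈ C, IsScottOpenFilter F)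
    (hchain : IsChain (· ⊆ ·) C) (hne : C.Nonempty) : IsScottOpenFilter (⋃₀ C) := by
  obtain ⟨F₀, hF₀⟩ := hne
  refine ⟨⟨F₀, hF₀, (hC F₀ hF₀).top_mem⟩, isUpperSet_sUnion fun F hF => (hC F hF).isUpperSet,
    ?_, ?_⟩
  · rintro y z ⟨F, hF, hy⟩ ⟨G, hG, hz⟩
    rcases hchain.total hF hG with hFG | hGF
    · exact ⟨G, hG, (hC G hG).inf_mem (hFG hy) hz⟩
    · exact ⟨F, hF, (hC F hF).inf_mem hy (hGF hz)⟩
  · rintro D hD hdir ⟨F, hF, hDF⟩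
    obtain ⟨d, hd, hdF⟩ := (hC F hF).exists_mem_of_sSup_mem D hD hdir hDF
    exact ⟨d, hd, F, hF, hdF⟩

theorem sup_mem_or_of_maximal {b : L} (h : Maximal (fun G => IsScottOpenFilter G ∧ b ∉ G) F)
    {y z : L} (hyz : y ⊔ z ∈ F) : y ∈ F ∨ z ∈ F := by
  obtain ⟨⟨hF, hbF⟩, hmax⟩ := h
  -- `{w | u ⊔ w ∈ F} ⊇ F`, so by maximality it is `F` unless it contains `b`
  have key {u v : L} (huv : u ⊔ v ∈ F) (hv : v ∉ F) : u ⊔ b ∈ F := by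
    by_contra hub
    exact hv (hmax ⟨hF.preimage_sup_left u, hub⟩ (fun _ h => hF.isUpperSet le_sup_right h) huv)
  by_contra! ⟨hy, hz⟩
  have hby : b ⊔ y ∈ F := sup_comm y b ▸ key hyz hz
  exact hbF (sup_idem b ▸ key hby hy)

theorem exists_pt (hF : IsScottOpenFilter F) {b : L} (hb : b ∉ F) :
    ∃ p : PT L, (∀ y ∈ F, p y) ∧ ¬ p b := by
  obtain ⟨M, hFM, hM⟩ := zorn_subset_nonempty {G | IsScottOpenFilter G ∧ b ∉ G}
    (fun C hC hchain hne => ⟨⋃₀ C, ⟨sUnion (fun G hG => (hC hG).1) hchain hne,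
      fun ⟨G, hG, hbG⟩ => (hC hG).2 hbG⟩, fun _ => subset_sUnion_of_mem⟩) F ⟨hF, hb⟩
  have hbot : ⊥ ∉ M := fun h => hM.1.2 (hM.1.1.isUpperSet bot_le h)
  exact ⟨hM.1.1.toPT hbot fun _ _ => sup_mem_or_of_maximal hM, hFM, hM.1.2⟩

theorem isCompact_setOf_forall_apply (hF : IsScottOpenFilter F) :
    IsCompact {p : PT L | ∀ y ∈ F, p y} := by
  rw [isCompact_iff_finite_subcover]
  intro ι U hU hcover
  choose u hu using fun i => (PT.isOpen_iff L (U i)).1 (hU i)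
  have hsup : ⨆ i, u i ∈ F := by
    by_contra h
    obtain ⟨p, hpF, hp⟩ := hF.exists_pt h
    obtain ⟨i, hi⟩ := mem_iUnion.1 (hcover hpF)
    rw [← hu i] at hi
    exact hp (OrderHomClass.mono p (le_iSup u i) hi)
  obtain ⟨t, ht⟩ := hF.exists_finset_sup_mem u hsup
  refine ⟨t, fun p hp => ?_⟩
  simpa [map_finset_sup, Finset.sup_eq_iSup, ← hu] using hp _ ht

end Frame

end IsScottOpenFilter

namespace Locale.PT

variable {L : Type*} [CompleteLattice L]

theorem specializes_iff {p q : PT L} : p ⤳ q ↔ ∀ a, q a → p a := by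
  rw [specializes_iff_forall_open]
  exact ⟨fun h a => h _ ⟨a, rfl⟩, by rintro h _ ⟨a, rfl⟩; exact h a⟩

instance : T0Space (PT L) :=
  t0Space_iff_inseparable _ |>.2 fun p q h =>
    DFunLike.ext p q fun a => propext (h.mem_open_iff ⟨a, rfl⟩)

instance : QuasiSober (PT L) := by
  refine ⟨fun {Z} hZ hZc => ?_⟩
  -- the generic point of `Z` is the join of its points, a point by irreducibility of `Z`
  let q : PT L :=
    { toFun a := ∃ p ∈ Z, p a
      map_inf' a b := by
        simp only [map_inf]
        exact propext ⟨fun ⟨p, hp, ha, hb⟩ => ⟨⟨p, hp, ha⟩, p, hp, hb⟩,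
          fun ⟨ha, hb⟩ => hZ.2 _ _ ⟨a, rfl⟩ ⟨b, rfl⟩ ha hb⟩
      map_top' := by
        simp only [map_top]
        exact eq_true <| let ⟨p, hp⟩ := hZ.1; ⟨p, hp, trivial⟩
      map_sSup' T := by
        simp only [map_sSup, sSup_image, iSup_Prop_eq, exists_prop]
        exact propext ⟨fun ⟨p, hp, a, ha, hpa⟩ => ⟨a, ha, p, hp, hpa⟩,
          fun ⟨a, ha, p, hp, hpa⟩ => ⟨p, hp, a, ha, hpa⟩⟩ }
  refine ⟨q, isGenericPoint_iff_specializes.2 fun p => ?_⟩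
  rw [specializes_iff]
  refine ⟨fun h => ?_, fun hp a hpa => ⟨p, hp, hpa⟩⟩
  obtain ⟨w, hw⟩ := (PT.isOpen_iff L Zᶜ).1 hZc.isOpen_compl
  by_contra hpZ
  obtain ⟨p', hp', hp'w⟩ := h w ((Set.ext_iff.1 hw p).2 hpZ)
  exact (Set.ext_iff.1 hw p').1 hp'w hp'

theorem apply_sSup_iff (p : PT L) (S : Set L) : p (sSup S) ↔ ∃ a ∈ S, p a := by
  simp only [map_sSup, sSup_image, iSup_Prop_eq, exists_prop]

end Locale.PT

namespace IsContinuousLattice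

variable {L : Type*} [Order.Frame L]

theorem exists_isScottOpenFilter (hL : IsContinuousLattice L) {x a : L} (h : WayBelow x a) :
    ∃ F : Set L, IsScottOpenFilter F ∧ a ∈ F ∧ F ⊆ Ici x := by
  obtain ⟨c, rfl, hxc, hc⟩ := hL.exists_seq_wayBelow h
  exact ⟨_, .setOf_exists_le_of_wayBelow hc, ⟨0, le_rfl⟩, fun _ ⟨n, hn⟩ => (hxc n).trans hn⟩

theorem exists_pt_of_not_le (hL : IsContinuousLattice L) {a b : L} (hab : ¬ a ≤ b) :
    ∃ p : PT L, p a ∧ ¬ p b := by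
  obtain ⟨x, hxa, hxb⟩ : ∃ x, WayBelow x a ∧ ¬ x ≤ b := by
    by_contra! h
    exact hab ((hL a).le.trans (sSup_le h))
  obtain ⟨F, hF, haF, hFx⟩ := hL.exists_isScottOpenFilter hxa
  obtain ⟨p, hpF, hpb⟩ := hF.exists_pt fun hbF => hxb (hFx hbF)
  exact ⟨p, hpF a haF, hpb⟩

theorem locallyCompactSpace_pt (hL : IsContinuousLattice L) : LocallyCompactSpace (PT L) := by
  refine ⟨fun p n hn => ?_⟩
  obtain ⟨_, hOn, ⟨a, rfl⟩, hpa⟩ := mem_nhds_iff.1 hn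
  obtain ⟨x, hxa, hpx⟩ := (PT.apply_sSup_iff p _).1 (hL a ▸ hpa : p (sSup _))
  obtain ⟨F, hF, haF, hFx⟩ := hL.exists_isScottOpenFilter hxa
  refine ⟨{q | ∀ y ∈ F, q y}, mem_nhds_iff.2 ⟨{q | q x}, ?_, ⟨x, rfl⟩, hpx⟩,
    fun q hq => hOn (hq a haF), hF.isCompact_setOf_forall_apply⟩
  exact fun q hqx y hy => OrderHomClass.mono q (hFx hy) hqx

end IsContinuousLattice

namespace TopologicalSpace.Opens

variable {X : Type*} [TopologicalSpace X]

theorem wayBelow_of_subset_isCompact {U V : Opens X} {K : Set X} (hK : IsCompact K)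
    (hUK : (U : Set X) ⊆ K) (hKV : K ⊆ V) : WayBelow U V := by
  intro D hD hdir hVD
  have : Nonempty D := hD.to_subtype
  obtain ⟨⟨d, hd⟩, hKd⟩ := hK.elim_directed_cover (fun d : D => (d : Set X)) (fun d => d.1.isOpen)
    (fun z hz => by simpa using Opens.mem_sSup.1 (hVD (hKV hz)))
    ((directedOn_iff_directed.1 hdir).mono_comp _ fun _ _ h => h)
  exact ⟨d, hd, hUK.trans hKd⟩

theorem isContinuousLattice [LocallyCompactSpace X] : IsContinuousLattice (Opens X) := by
  refine fun a => le_antisymm (fun y hy => ?_) (sSup_le fun x hx => hx.le)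
  obtain ⟨K, hKy, hKa, hK⟩ := local_compact_nhds (a.isOpen.mem_nhds hy)
  exact Opens.mem_sSup.2 ⟨Opens.interior K, wayBelow_of_subset_isCompact hK interior_subset hKa,
    mem_interior_iff_mem_nhds.2 hKy⟩

end TopologicalSpace.Opens

namespace Locale

section Unit

variable {X : Type*} [TopologicalSpace X]

theorem localePointOfSpacePoint_injective [T0Space X] :
    Function.Injective (localePointOfSpacePoint X) := fun _ _ h =>
  (inseparable_iff_forall_isOpen.2 fun s hs => iff_of_eq (DFunLike.congr_fun h ⟨s, hs⟩)).eq

theorem localePointOfSpacePoint_surjective [QuasiSober X] :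
    Function.Surjective (localePointOfSpacePoint X) := by
  intro p
  -- `p` is the generic point of the complement of the largest open on which it is false
  let W : Opens X := sSup {U | ¬ p U}
  have hW : ¬ p W := fun h => by simpa using (PT.apply_sSup_iff p _).1 h
  have hpU (U : Opens X) : p U ↔ ((W : Set X)ᶜ ∩ U).Nonempty := by
    refine ⟨fun hU => ?_, fun ⟨z, hzW, hzU⟩ =>
      by_contra fun hU => hzW ((le_sSup hU : U ≤ W) hzU)⟩
    by_contra! h
    exact hW (OrderHomClass.mono p (show U ≤ W from fun z hz => by_contra fun hzW =>
      (h.subset ⟨hzW, hz⟩ : z ∈ (∅ : Set X))) hU)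
  have hirr : IsIrreducible (W : Set X)ᶜ := by
    refine ⟨by simpa using (hpU ⊤).1 (by simp), fun u v hu hv hWu hWv => ?_⟩
    exact (hpU (⟨u, hu⟩ ⊓ ⟨v, hv⟩)).1 (by rw [map_inf]; exact ⟨(hpU _).2 hWu, (hpU _).2 hWv⟩)
  obtain ⟨x, hx⟩ := QuasiSober.sober hirr W.isOpen.isClosed_compl
  exact ⟨x, DFunLike.ext _ _ fun U => propext ((hx.mem_open_set_iff U.isOpen).trans (hpU U).symm)⟩

theorem isHomeomorph_localePointOfSpacePoint [QuasiSober X] [T0Space X] :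
    IsHomeomorph (localePointOfSpacePoint X) := by
  refine ⟨continuous_def.2 ?_, fun U hU => ⟨⟨U, hU⟩, ?_⟩,
    ⟨localePointOfSpacePoint_injective, localePointOfSpacePoint_surjective⟩⟩
  · rintro _ ⟨u, rfl⟩
    exact u.isOpen
  · ext q
    obtain ⟨x, rfl⟩ := localePointOfSpacePoint_surjective q
    exact (localePointOfSpacePoint_injective (X := X)).mem_set_image.symm

end Unit

theorem counitAppCont_le_counitAppCont_iff {L : Locale} (hL : IsContinuousLattice L)
    {a b : L} : counitAppCont L a ≤ counitAppCont L b ↔ a ≤ b := by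
  refine ⟨fun hab => by_contra fun h => ?_, fun h => OrderHomClass.mono _ h⟩
  obtain ⟨p, hpa, hpb⟩ := hL.exists_pt_of_not_le h
  exact hpb (hab hpa)

theorem counitAppCont_surjective (L : Locale) :
    Function.Surjective (counitAppCont L) := fun U =>
  let ⟨u, hu⟩ := (PT.isOpen_iff L U).1 U.isOpen
  ⟨u, Opens.ext hu⟩

theorem isIso_adjunctionTopToLocalePT_unit_app (X : TopCat.{u}) [QuasiSober X] [T0Space X] :
    IsIso (adjunctionTopToLocalePT.unit.app X) :=
  (TopCat.isIso_iff_isHomeomorph _).2 (isHomeomorph_localePointOfSpacePoint (X := X))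

theorem isIso_adjunctionTopToLocalePT_counit_app (L : Locale.{u}) (hL : IsContinuousLattice L) :
    IsIso (adjunctionTopToLocalePT.counit.app L) := by
  let e : L.unop ≃o Opens (PT L.unop) := .ofSurjective
    (.ofMapLEIff (counitAppCont L) fun _ _ => counitAppCont_le_counitAppCont_iff hL)
    (counitAppCont_surjective L)
  exact (Frm.Iso.mk (α := L.unop) (β := .of (Opens (PT L.unop))) e).op.isIso_hom

end Locale

/-- **Hofmann–Lawson duality.** The adjunction between `Top` and `Loc`,
given by the open-sets functor `topToLocale` and the points functor `pt`, restricts to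
an equivalence between the full subcategory of sober locally compact spaces and the full
subcategory of continuous locales: both functors preserve these subcategories, the unit
is an isomorphism at every sober locally compact space, and the counit is an isomorphism
at every continuous locale. -/
theorem hofmannLawson_duality :
    (∀ X : TopCat.{u}, IsSoberLocallyCompact X →
        IsContinuousLocale (topToLocale.obj X)) ∧
    (∀ L : Locale.{u}, IsContinuousLocale L →
        IsSoberLocallyCompact (Locale.pt.obj L)) ∧
    (∀ X : TopCat.{u}, IsSoberLocallyCompact X →
        IsIso (Locale.adjunctionTopToLocalePT.unit.app X)) ∧
    (∀ L : Locale.{u}, IsContinuousLocale L →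
        IsIso (Locale.adjunctionTopToLocalePT.counit.app L)) :=
  ⟨fun _ ⟨_, _, _⟩ => Opens.isContinuousLattice,
    fun L hL => ⟨inferInstanceAs (QuasiSober (PT L.unop)), inferInstanceAs (T0Space (PT L.unop)),
      IsContinuousLattice.locallyCompactSpace_pt hL⟩,
    fun X ⟨_, _, _⟩ => isIso_adjunctionTopToLocalePT_unit_app X,
    fun L hL => isIso_adjunctionTopToLocalePT_counit_app L hL⟩
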